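/- arXiv:1501.04466 — 3 statements merged into one kernel-verified Lean document; each statement's English description precedes it below -/
import Mathlib

section
/- For natural numbers m, d ≥ 1 and 0 < ℓ ≤ n−1, the identity ∏_{s=0}^{ℓ} [ 2 · (2^s m) · (2^(2^s − 1) d^(2^s)) ] · ∏_{r=1}^{n−ℓ−1} [ 2 · (2^(2^r · ℓ) m^(2^r)) · (2^(2^(ℓ+r) − 1) d^(2^(ℓ+r))) ] = (2d)^(2^n − 1) · m^(2^(n−ℓ) + ℓ − 1) · 2^(ℓ·2^(n−ℓ) + ℓ(ℓ−3)/2) holds, where the exponent ℓ·2^(n−ℓ) + ℓ(ℓ−3)/2 is interpreted as an integer (it may be negative when ℓ is small). -/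
open Finset

private lemma two_mul_pow_pred (x : ℕ) (hx : 1 ≤ x) : 2 * 2 ^ (x - 1) = 2 ^ x := by
  rw [← pow_succ']
  congr 1
  omega

private lemma sum_two_pow (t : ℕ) : ∑ i ∈ Finset.range t, 2 ^ i = 2 ^ t - 1 := by
  induction t with
  | zero => simp
  | succ t ih =>
    rw [Finset.sum_range_succ, ih]
    have : 1 ≤ 2 ^ t := Nat.one_le_two_pow
    have : 2 ^ (t + 1) = 2 * 2 ^ t := by ring
    omega

private lemma prod1_eq (m d ℓ : ℕ) :
    (∏ s ∈ Finset.range (ℓ + 1),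
        (2 * (2 ^ s * m) * (2 ^ (2 ^ s - 1) * d ^ (2 ^ s))) : ℕ)
      = 2 ^ (∑ s ∈ Finset.range (ℓ + 1), s) * m ^ (ℓ + 1) * (2 * d) ^ (2 ^ (ℓ + 1) - 1) := by
  have key : ∀ s : ℕ, 2 * (2 ^ s * m) * (2 ^ (2 ^ s - 1) * d ^ (2 ^ s))
      = 2 ^ s * m * (2 * d) ^ (2 ^ s) := by
    intro s
    rw [mul_pow, ← two_mul_pow_pred (2 ^ s) Nat.one_le_two_pow]
    ring
  calc (∏ s ∈ Finset.range (ℓ + 1),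
        (2 * (2 ^ s * m) * (2 ^ (2 ^ s - 1) * d ^ (2 ^ s))) : ℕ)
      = ∏ s ∈ Finset.range (ℓ + 1), (2 ^ s * m * (2 * d) ^ (2 ^ s)) := by
        exact Finset.prod_congr rfl fun s _ => key s
    _ = (∏ s ∈ Finset.range (ℓ + 1), 2 ^ s) * (∏ _s ∈ Finset.range (ℓ + 1), m)
          * (∏ s ∈ Finset.range (ℓ + 1), (2 * d) ^ (2 ^ s)) := by
        rw [Finset.prod_mul_distrib, Finset.prod_mul_distrib]
    _ = 2 ^ (∑ s ∈ Finset.range (ℓ + 1), s) * m ^ (ℓ + 1) * (2 * d) ^ (2 ^ (ℓ + 1) - 1) := by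
        rw [Finset.prod_pow_eq_pow_sum, Finset.prod_const, Finset.card_range,
          Finset.prod_pow_eq_pow_sum, sum_two_pow]

private lemma prod2_eq (m d ℓ t : ℕ) :
    (∏ r ∈ Finset.Icc 1 t,
        (2 * (2 ^ (2 ^ r * ℓ) * m ^ (2 ^ r)) * (2 ^ (2 ^ (ℓ + r) - 1) * d ^ (2 ^ (ℓ + r)))) : ℕ)
      = 2 ^ (ℓ * (2 ^ (t + 1) - 2)) * m ^ (2 ^ (t + 1) - 2)
          * (2 * d) ^ (2 ^ (ℓ + t + 1) - 2 ^ (ℓ + 1)) := by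
  induction t with
  | zero => simp
  | succ t ih =>
    rw [Finset.prod_Icc_succ_top (by omega), ih]
    have key : 2 * (2 ^ (2 ^ (t + 1) * ℓ) * m ^ (2 ^ (t + 1)))
        * (2 ^ (2 ^ (ℓ + (t + 1)) - 1) * d ^ (2 ^ (ℓ + (t + 1))))
        = 2 ^ (2 ^ (t + 1) * ℓ) * m ^ (2 ^ (t + 1)) * (2 * d) ^ (2 ^ (ℓ + (t + 1))) := by
      rw [mul_pow, ← two_mul_pow_pred (2 ^ (ℓ + (t + 1))) Nat.one_le_two_pow]
      ring
    rw [key]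
    have h2 : 2 ≤ 2 ^ (t + 1) := by
      calc 2 = 2 ^ 1 := by norm_num
        _ ≤ 2 ^ (t + 1) := Nat.pow_le_pow_right (by norm_num) (by omega)
    have e2 : 2 ^ (t + 1 + 1) - 2 = (2 ^ (t + 1) - 2) + 2 ^ (t + 1) := by
      have h : 2 ^ (t + 1 + 1) = 2 * 2 ^ (t + 1) := by ring
      omega
    have e1 : ℓ * (2 ^ (t + 1 + 1) - 2) = ℓ * (2 ^ (t + 1) - 2) + 2 ^ (t + 1) * ℓ := by
      rw [e2]; ring
    have e3 : 2 ^ (ℓ + (t + 1) + 1) - 2 ^ (ℓ + 1)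
        = (2 ^ (ℓ + t + 1) - 2 ^ (ℓ + 1)) + 2 ^ (ℓ + (t + 1)) := by
      have hA : 2 ^ (ℓ + (t + 1) + 1) = 2 * 2 ^ (ℓ + t + 1) := by
        rw [show ℓ + (t + 1) + 1 = (ℓ + t + 1) + 1 from by omega, pow_succ]; ring
      have hB : 2 ^ (ℓ + (t + 1)) = 2 ^ (ℓ + t + 1) := by
        rw [show ℓ + (t + 1) = ℓ + t + 1 from by omega]
      have hle : 2 ^ (ℓ + 1) ≤ 2 ^ (ℓ + t + 1) := Nat.pow_le_pow_right (by norm_num) (by omega)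
      omega
    rw [e1, e2, e3, pow_add, pow_add, pow_add]
    ring

theorem dominant_term_reduced_projection (m d n ℓ : ℕ)
    (hm : 1 ≤ m) (hd : 1 ≤ d) (hl : 0 < ℓ) (hln : ℓ ≤ n - 1) :
    ((∏ s ∈ Finset.range (ℓ + 1),
        (2 * (2 ^ s * m) * (2 ^ (2 ^ s - 1) * d ^ (2 ^ s))) : ℕ) : ℚ) *
      ((∏ r ∈ Finset.Icc 1 (n - ℓ - 1),
        (2 * (2 ^ (2 ^ r * ℓ) * m ^ (2 ^ r)) * (2 ^ (2 ^ (ℓ + r) - 1) * d ^ (2 ^ (ℓ + r)))) : ℕ) : ℚ)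
    = ((2 * d : ℚ) ^ (2 ^ n - 1) * (m : ℚ) ^ (2 ^ (n - ℓ) + ℓ - 1)) *
        (2 : ℚ) ^ ((ℓ : ℤ) * 2 ^ (n - ℓ) + (ℓ : ℤ) * ((ℓ : ℤ) - 3) / 2) := by
  have hn : ℓ + 1 ≤ n := by omega
  set t : ℕ := n - ℓ - 1 with ht
  have htn : ℓ + t + 1 = n := by omega
  have hnl : n - ℓ = t + 1 := by omega
  rw [prod1_eq, prod2_eq, Finset.sum_range_id]
  have h2t : 2 ≤ 2 ^ (t + 1) := by
    calc 2 = 2 ^ 1 := by norm_num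
      _ ≤ 2 ^ (t + 1) := Nat.pow_le_pow_right (by norm_num) (by omega)
  have hle : 2 ^ (ℓ + 1) ≤ 2 ^ (ℓ + t + 1) := Nat.pow_le_pow_right (by norm_num) (by omega)
  -- m exponent
  have hm_exp : (ℓ + 1) + (2 ^ (t + 1) - 2) = 2 ^ (n - ℓ) + ℓ - 1 := by
    rw [hnl]; omega
  -- (2d) exponent
  have hd_exp : (2 ^ (ℓ + 1) - 1) + (2 ^ (ℓ + t + 1) - 2 ^ (ℓ + 1)) = 2 ^ n - 1 := by
    have h1 : 1 ≤ 2 ^ (ℓ + 1) := Nat.one_le_two_pow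
    rw [← htn]; omega
  -- 2 exponent
  have h2_exp : (ℓ : ℤ) * 2 ^ (n - ℓ) + (ℓ : ℤ) * ((ℓ : ℤ) - 3) / 2
      = (((ℓ + 1) * ℓ / 2 + ℓ * (2 ^ (t + 1) - 2) : ℕ) : ℤ) := by
    rw [hnl]
    have hsub : ℓ * (2 ^ (t + 1) - 2) = ℓ * 2 ^ (t + 1) - ℓ * 2 := Nat.mul_sub ..
    have hle2 : ℓ * 2 ≤ ℓ * 2 ^ (t + 1) := Nat.mul_le_mul_left ℓ h2t
    have hG : ((ℓ + 1) * ℓ / 2) * 2 = (ℓ + 1) * ℓ :=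
      Nat.div_mul_cancel (by simpa [mul_comm] using (Nat.even_mul_succ_self ℓ).two_dvd)
    have hGZ : (((ℓ + 1) * ℓ / 2 : ℕ) : ℤ) * 2 = ((ℓ : ℤ) + 1) * ℓ := by
      exact_mod_cast congrArg (Nat.cast : ℕ → ℤ) hG
    have hdiv : (ℓ : ℤ) * ((ℓ : ℤ) - 3) / 2 = (((ℓ + 1) * ℓ / 2 : ℕ) : ℤ) - 2 * ℓ := by
      have h : (ℓ : ℤ) * ((ℓ : ℤ) - 3) = ((((ℓ + 1) * ℓ / 2 : ℕ) : ℤ) - 2 * ℓ) * 2 := by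
        have e : (ℓ : ℤ) * ((ℓ : ℤ) - 3) = ((ℓ : ℤ) + 1) * ℓ - 4 * ℓ := by ring
        rw [e, ← hGZ]; ring
      rw [h, Int.mul_ediv_cancel _ (by norm_num)]
    rw [hdiv, hsub]
    push_cast [Nat.cast_sub hle2]
    ring
  rw [h2_exp, zpow_natCast]
  push_cast
  rw [← hm_exp, ← hd_exp, pow_add, pow_add, pow_add]
  push_cast
  ring
end

section
/- Let R be a commutative ring and f, g ∈ (R[X])[Y] with deg_Y f, deg_Y g ≤ d and all coefficients (as polynomials in X) of degree ≤ d. Then the resultant res_Y(f,g) ∈ R[X] has degree at most 2d² in X. -/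
open Polynomial

/-- The Sylvester matrix of two univariate polynomials. The first
`g.natDegree` rows contain shifted copies of the coefficients of `f`,
and the remaining `f.natDegree` rows contain shifted copies of the
coefficients of `g`. -/
noncomputable def sylvesterMatrix {R : Type*} [CommRing R] (f g : R[X]) :
    Matrix (Fin (g.natDegree + f.natDegree)) (Fin (g.natDegree + f.natDegree)) R :=
  fun i j =>
    if (i : ℕ) < g.natDegree then
      if (i : ℕ) ≤ (j : ℕ) ∧ (j : ℕ) ≤ (i : ℕ) + f.natDegree then
        f.coeff (f.natDegree + i - j)
      else 0
    else
      if (i : ℕ) - g.natDegree ≤ (j : ℕ) ∧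
          (j : ℕ) ≤ (i : ℕ) - g.natDegree + g.natDegree then
        g.coeff (g.natDegree + ((i : ℕ) - g.natDegree) - j)
      else 0

/-- The resultant of two univariate polynomials: the determinant of their
Sylvester matrix. -/
noncomputable def resultant {R : Type*} [CommRing R] (f g : R[X]) : R :=
  (sylvesterMatrix f g).det

theorem Polynomial.natDegree_det_le_of_forall_le {R n : Type*} [CommRing R] [Fintype n]
    [DecidableEq n] (M : Matrix n n R[X]) {d : ℕ} (h : ∀ i j, (M i j).natDegree ≤ d) :
    M.det.natDegree ≤ Fintype.card n * d := by
  rw [Matrix.det_apply]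
  refine natDegree_sum_le_of_forall_le _ _ fun σ _ => ?_
  calc (Equiv.Perm.sign σ • ∏ i, M (σ i) i).natDegree
      ≤ (∏ i, M (σ i) i).natDegree := natDegree_smul_le _ _
    _ ≤ ∑ i, (M (σ i) i).natDegree := natDegree_prod_le _ _
    _ ≤ ∑ _i : n, d := Finset.sum_le_sum fun i _ => h _ _
    _ = Fintype.card n * d := by simp

theorem natDegree_sylvesterMatrix_apply_le {R : Type*} [CommRing R] {f g : R[X][X]} {d : ℕ}
    (hfc : ∀ k, (f.coeff k).natDegree ≤ d) (hgc : ∀ k, (g.coeff k).natDegree ≤ d) (i j) :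
    (sylvesterMatrix f g i j).natDegree ≤ d := by
  unfold sylvesterMatrix
  split_ifs <;> simp [hfc, hgc]

theorem resultant_degree_bound {R : Type*} [CommRing R]
    (d : ℕ) (f g : Polynomial (Polynomial R))
    (hf : f.natDegree ≤ d) (hg : g.natDegree ≤ d)
    (hfc : ∀ i, (f.coeff i).natDegree ≤ d)
    (hgc : ∀ i, (g.coeff i).natDegree ≤ d) :
    (_root_.resultant f g).natDegree ≤ 2 * d ^ 2 := by
  have hdet := natDegree_det_le_of_forall_le (sylvesterMatrix f g)
    (natDegree_sylvesterMatrix_apply_le hfc hgc)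
  rw [Fintype.card_fin] at hdet
  calc (_root_.resultant f g).natDegree ≤ (g.natDegree + f.natDegree) * d := hdet
    _ ≤ 2 * d * d := by gcongr; omega
    _ = 2 * d ^ 2 := by ring
end

section
/- For natural numbers d ≥ 1, m ≥ 2, n ≥ 2, and 1 ≤ ℓ ≤ n − 1, the inequality (2d)^(2^n − 1) · m^(2^(n−ℓ) − 2) · 2^(ℓ·2^(n−ℓ) − 3ℓ) ≤ (2d)^(2^n − 1) · m^(2^n − 1) · 2^(2^(n−1) − 1) holds (comparing the exponents over the integers, with the left-hand exponent of 2 possibly negative, interpreted in ℚ). -/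
/-! The comparison is factorwise: the exponent of `m` only grows, and since `ℓ ≤ 2 ^ (ℓ - 1)`
the exponent of `2` on the left, `ℓ * 2 ^ (n - ℓ) - 3ℓ`, is below `2 ^ (n - 1) - 1`. -/

theorem le_two_pow_pred (ℓ : ℕ) : ℓ ≤ 2 ^ (ℓ - 1) := by
  have := Nat.lt_two_pow_self (n := ℓ - 1)
  omega

theorem mul_two_pow_sub_le_two_pow_pred {ℓ n : ℕ} (hℓ : ℓ ≤ n - 1) :
    ℓ * 2 ^ (n - ℓ) ≤ 2 ^ (n - 1) := by
  rcases Nat.eq_zero_or_pos ℓ with rfl | hpos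
  · simp
  calc ℓ * 2 ^ (n - ℓ) ≤ 2 ^ (ℓ - 1) * 2 ^ (n - ℓ) := by gcongr; exact le_two_pow_pred ℓ
    _ = 2 ^ (n - 1) := by rw [← pow_add]; congr 1; omega

theorem dominant_term_comparison_general (m d n ℓ : ℕ)
    (hm : 2 ≤ m) (hl1 : 1 ≤ ℓ) (hl2 : ℓ ≤ n - 1) :
    ((2 * d : ℚ) ^ (2 ^ n - 1) * (m : ℚ) ^ (2 ^ (n - ℓ) - 2)) *
        (2 : ℚ) ^ ((ℓ : ℤ) * 2 ^ (n - ℓ) - 3 * (ℓ : ℤ)) ≤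
      (2 * d : ℚ) ^ (2 ^ n - 1) * (m : ℚ) ^ (2 ^ n - 1) * 2 ^ (2 ^ (n - 1) - 1) := by
  have hm_exp : 2 ^ (n - ℓ) - 2 ≤ 2 ^ n - 1 := by
    have : 2 ^ (n - ℓ) ≤ 2 ^ n := Nat.pow_le_pow_right two_pos (Nat.sub_le n ℓ)
    omega
  have h2_exp : (ℓ : ℤ) * 2 ^ (n - ℓ) - 3 * ℓ ≤ ((2 ^ (n - 1) - 1 : ℕ) : ℤ) := by
    have key : ((ℓ * 2 ^ (n - ℓ) : ℕ) : ℤ) ≤ ((2 ^ (n - 1) : ℕ) : ℤ) :=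
      Nat.cast_le.mpr (mul_two_pow_sub_le_two_pow_pred hl2)
    push_cast [Nat.cast_sub Nat.one_le_two_pow] at key ⊢
    omega
  rw [← zpow_natCast (2 : ℚ) (2 ^ (n - 1) - 1)]
  gcongr
  · exact_mod_cast hm.trans' one_le_two
  · norm_num

theorem dominant_term_comparison (m d n ℓ : ℕ)
    (hd : 1 ≤ d) (hm : 2 ≤ m) (hn : 2 ≤ n) (hl1 : 1 ≤ ℓ) (hl2 : ℓ ≤ n - 1) :
    ((2 * d : ℚ) ^ (2 ^ n - 1) * (m : ℚ) ^ (2 ^ (n - ℓ) - 2)) *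
        (2 : ℚ) ^ ((ℓ : ℤ) * 2 ^ (n - ℓ) - 3 * (ℓ : ℤ)) ≤
      (2 * d : ℚ) ^ (2 ^ n - 1) * (m : ℚ) ^ (2 ^ n - 1) * 2 ^ (2 ^ (n - 1) - 1) :=
  dominant_term_comparison_general m d n ℓ hm hl1 hl2
end
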